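/- arXiv:2410.13123 — 7 statements merged into one kernel-verified Lean document; each statement's English description precedes it below -/
import Mathlib

section
/- A bipartite graph G is a bicluster graph (every connected component is a complete bipartite graph) if and only if G contains no two verticesu, v on the same side of the bipartition such that N(u) ∩ N(v) ≠ ∅ and N(u) △ N(v) ≠ ∅. -/
/-!
In a bicluster graph, two vertices on one side with a common neighbour lie in the same component,
so both are adjacent to every vertex of the other side of that component: their neighbourhoods
coincide. Conversely, if same-side vertices sharing a neighbour always have equal neighbourhoods,
induction along a walk shows that its endpoints have equal neighbourhoods when they are on the same
side and are adjacent when they are on opposite sides.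
-/

def BipartiteWith {V : Type*} (G : SimpleGraph V) (side : V → Bool) : Prop :=
  ∀ u v, G.Adj u v → side u ≠ side v

/-- Every connected component of `G` is a bicluster (complete bipartite). -/
def BiclusterGraph {V : Type*} (G : SimpleGraph V) (side : V → Bool) : Prop :=
  ∀ u v, G.Reachable u v → side u ≠ side v → G.Adj u v

section

variable {V : Type*} {G : SimpleGraph V} {side : V → Bool}

lemma BiclusterGraph.neighborSet_subset (hB : BiclusterGraph G side) (hG : BipartiteWith G side)
    {u v w : V} (huv : side u = side v) (hwu : G.Adj u w) (hwv : G.Adj v w) :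
    G.neighborSet u ⊆ G.neighborSet v := fun x hux =>
  hB v x (hwv.reachable.trans <| hwu.symm.reachable.trans hux.reachable) (huv ▸ hG u x hux)

lemma BiclusterGraph.neighborSet_eq (hB : BiclusterGraph G side) (hG : BipartiteWith G side)
    {u v w : V} (huv : side u = side v) (hwu : G.Adj u w) (hwv : G.Adj v w) :
    G.neighborSet u = G.neighborSet v :=
  (hB.neighborSet_subset hG huv hwu hwv).antisymm (hB.neighborSet_subset hG huv.symm hwv hwu)

lemma BipartiteWith.walk_endpoints (hG : BipartiteWith G side)
    (hN : ∀ u v, side u = side v → (G.neighborSet u ∩ G.neighborSet v).Nonempty →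
      G.neighborSet u = G.neighborSet v) {u v : V} (p : G.Walk u v) :
    (side u = side v → G.neighborSet u = G.neighborSet v) ∧ (side u ≠ side v → G.Adj u v) := by
  induction p with
  | nil => exact ⟨fun _ => rfl, absurd rfl⟩
  | @cons u w v huw _ ih =>
    have hsw : side u ≠ side w := hG u w huw
    refine ⟨fun huv => hN u v huv ⟨w, huw, (ih.2 (huv ▸ hsw.symm)).symm⟩, fun huv => ?_⟩
    have hwv : side w = side v := by
      revert hsw huv; cases side u <;> cases side w <;> cases side v <;> decide
    exact (ih.1 hwv ▸ huw.symm : u ∈ G.neighborSet v).symm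

end

theorem stmt_1 {V : Type*} (G : SimpleGraph V) (side : V → Bool)
    (hG : BipartiteWith G side) :
    BiclusterGraph G side ↔
      ¬ ∃ u v, side u = side v ∧ (G.neighborSet u ∩ G.neighborSet v).Nonempty ∧
        (symmDiff (G.neighborSet u) (G.neighborSet v)).Nonempty := by
  simp only [not_exists, not_and, Set.not_nonempty_iff_eq_empty, Set.symmDiff_eq_empty]
  constructor
  · exact fun hB u v huv ⟨w, hwu, hwv⟩ => hB.neighborSet_eq hG huv hwu hwv
  · exact fun hN u v ⟨p⟩ => (hG.walk_endpoints hN p).2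
end

section
/- Let G = (V₁ ∪ V₂, E) be a bipartite graph and let u be a vertex such that no vertex of G is in conflict with u. Then the connected component of G containing u is a bicluster (a complete bipartite graph, possibly a single vertex). -/
theorem stmt_2 {V : Type*} (G : SimpleGraph V) (side : V → Bool)
    (hG : BipartiteWith G side) (u : V)
    (hu : ∀ v, side u = side v →
      ¬ ((G.neighborSet u ∩ G.neighborSet v).Nonempty ∧
         (symmDiff (G.neighborSet u) (G.neighborSet v)).Nonempty)) :
    ∀ x y, G.Reachable u x → G.Reachable u y → side x ≠ side y → G.Adj x y := by
  have hset : ∀ v, side u = side v → (G.neighborSet u ∩ G.neighborSet v).Nonempty →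
      G.neighborSet v = G.neighborSet u := by
    intro v hs hne
    have h1 := hu v hs
    have hsd : symmDiff (G.neighborSet u) (G.neighborSet v) = ⊥ := by
      by_contra h
      exact h1 ⟨hne, Set.nonempty_iff_ne_empty.mpr h⟩
    exact (symmDiff_eq_bot.mp hsd).symm
  have main : ∀ x, G.Walk x u →
      (side x = side u → G.neighborSet x = G.neighborSet u) ∧
      (side x ≠ side u → x ∈ G.neighborSet u) := by
    intro x w
    clear hu
    induction w with
    | nil => exact ⟨fun _ => rfl, fun h => absurd rfl h⟩
    | @cons a b c h p ih =>
      have ih := ih hset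
      by_cases hb : side b = side c
      · have hN := ih.1 hb
        have hab : side a ≠ side b := hG a b h
        have hau : side a ≠ side c := by rw [hb] at hab; exact hab
        refine ⟨fun hc => absurd hc hau, fun _ => ?_⟩
        have : a ∈ G.neighborSet b := h.symm
        rwa [hN] at this
      · have hbN := ih.2 hb
        have hab : side a ≠ side b := hG a b h
        have hau : side a = side c := by
          cases hs : side a <;> cases hsb : side b <;> cases hsu : side c <;>
            simp_all
        have hNa : G.neighborSet a = G.neighborSet c := by
          apply hset a hau.symm
          exact ⟨b, hbN, h⟩
        exact ⟨fun _ => hNa, fun hc => absurd hau hc⟩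
  intro x y hx hy hxy
  have mx := main x hx.symm.some
  have my := main y hy.symm.some
  by_cases hxu : side x = side u
  · have hyu : side y ≠ side u := by rw [← hxu]; exact fun h => hxy h.symm
    have hy2 := my.2 hyu
    have hx1 := mx.1 hxu
    have : y ∈ G.neighborSet x := by rwa [hx1]
    exact this
  · have hx2 := mx.2 hxu
    have hyu : side y = side u := by
      cases hs : side x <;> cases hsy : side y <;> cases hsu : side u <;> simp_all
    have hy1 := my.1 hyu
    have : x ∈ G.neighborSet y := by rwa [hy1]
    exact this.symm
end

section
/- Let G be a bipartite graph with a twin class R such that |R| > |N(N(R)) \ R|, and let u ∈ R. Then for every integer k ≥ 0, G admits a biclustering of cost at most k if and only if G − u admits a biclustering of cost at most k. -/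
def Biclustering {V : Type*} (B : SimpleGraph V) (side : V → Bool) : Prop :=
  BipartiteWith B side ∧ BiclusterGraph B side

/-!
Deleting `u` never increases the optimal cost, so only the converse needs an argument. Let `N`
be the neighbourhood of `u`, `R` its twin class and `W = N(N) \ R`. Since `|W| < |R|`, there is
an injection `φ : W → R \ {u}`. Starting from a biclustering of `G - u`, put `R ∪ N` into one
new cluster, and let `x ∈ W` join that cluster exactly when it shared its old cluster with `φ x`.
Every edge has exactly one end on the side of `u`, so the cost is a sum over that side. After the
change every twin costs nothing, and a vertex outside `R ∪ W` has no neighbour in `N`, so it costs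
no more than before. The extra cost of `x ∈ W` is at most the old cost of `φ x`: by the triangle
inequality if `x` joins, and because its old cluster is disjoint from that of `φ x` if it does not.
-/

open Finset
open scoped symmDiff

section SymmDiffCard

variable {α : Type*} [Finite α] (a b c : Set α)

theorem Set.ncard_symmDiff_le_add : (a ∆ c).ncard ≤ (a ∆ b).ncard + (b ∆ c).ncard :=
  (Set.ncard_le_ncard (symmDiff_triangle a b c)).trans (Set.ncard_union_le _ _)

theorem Set.ncard_symmDiff_sdiff_le :
    (a ∆ (b \ c)).ncard ≤ (a ∆ b).ncard + (b ∩ c).ncard := by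
  have h : b ∆ (b \ c) = b ∩ c := by
    ext
    simp only [Set.mem_symmDiff, Set.mem_sdiff, Set.mem_inter_iff]
    tauto
  simpa only [h] using Set.ncard_symmDiff_le_add a b (b \ c)

theorem Set.ncard_symmDiff_sdiff_le_of_disjoint (h : Disjoint a c) :
    (a ∆ (b \ c)).ncard ≤ (a ∆ b).ncard := by
  refine Set.ncard_le_ncard fun y hy => ?_
  have := @Set.disjoint_left.1 h y
  simp only [Set.mem_symmDiff, Set.mem_sdiff] at hy ⊢
  tauto

end SymmDiffCard

theorem Finset.sum_add_le_sum_of_charging {ι : Type*} [DecidableEq ι] {S R W : Finset ι}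
    {f g : ι → ℕ} {φ : ι → ι} {u : ι} (hRS : R ⊆ S) (hWS : W ⊆ S)
    (hRW : Disjoint R W) (hu : u ∈ R) (hφ : Set.InjOn φ W)
    (hφW : ∀ x ∈ W, φ x ∈ R.erase u)
    (hfR : ∀ x ∈ R, f x = 0) (hfW : ∀ x ∈ W, f x ≤ g x + g (φ x))
    (hf : ∀ x ∈ S, x ∉ R → x ∉ W → f x ≤ g x) :
    ∑ x ∈ S, f x + g u ≤ ∑ x ∈ S, g x := by
  have hsplit (h : ι → ℕ) :
      ∑ x ∈ S, h x = ∑ x ∈ S \ (R ∪ W), h x + (∑ x ∈ R, h x + ∑ x ∈ W, h x) := by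
    rw [← sum_union hRW, sum_sdiff (union_subset hRS hWS)]
  have hrest : ∑ x ∈ S \ (R ∪ W), f x ≤ ∑ x ∈ S \ (R ∪ W), g x := by
    refine sum_le_sum fun x hx => ?_
    simp only [mem_sdiff, mem_union, not_or] at hx
    exact hf x hx.1 hx.2.1 hx.2.2
  have hW : ∑ x ∈ W, f x ≤ ∑ x ∈ W, g x + ∑ x ∈ W, g (φ x) := by
    rw [← sum_add_distrib]
    exact sum_le_sum hfW
  have hφsum : ∑ x ∈ W, g (φ x) + g u ≤ ∑ x ∈ R, g x := by
    rw [← sum_image hφ, ← sum_erase_add _ _ hu]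
    gcongr
    exact image_subset_iff.2 hφW
  rw [hsplit f, hsplit g, sum_eq_zero hfR]
  omega

theorem Set.exists_injOn_sdiff_singleton_of_ncard_lt {α β : Type*} [Finite α] {s : Set α}
    {t : Set β} {b : β} (h : s.ncard < t.ncard) (hb : b ∈ t) :
    ∃ φ : α → β, Set.MapsTo φ s (t \ {b}) ∧ Set.InjOn φ s := by
  have hle : s.encard ≤ (t \ {b}).encard := by
    have ht : t.Finite := Set.finite_of_ncard_pos (by omega)
    rw [← s.toFinite.cast_ncard_eq, ← ht.sdiff.cast_ncard_eq,
      Set.ncard_sdiff_singleton_of_mem hb]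
    exact_mod_cast (by omega : s.ncard ≤ t.ncard - 1)
  have : Nonempty β := ⟨b⟩
  exact s.toFinite.exists_injOn_of_encard_le hle

namespace SimpleGraph

variable {V : Type*}

theorem edgeSet_symmDiff (G H : SimpleGraph V) : (G ∆ H).edgeSet = G.edgeSet ∆ H.edgeSet := by
  simp [symmDiff_def, edgeSet_sup, edgeSet_sdiff]

theorem neighborSet_symmDiff (G H : SimpleGraph V) (v : V) :
    (G ∆ H).neighborSet v = G.neighborSet v ∆ H.neighborSet v := by
  simp [symmDiff_def, neighborSet_sup, neighborSet_sdiff]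

theorem induce_symmDiff (s : Set V) (G H : SimpleGraph V) :
    (G ∆ H).induce s = G.induce s ∆ H.induce s := by
  ext
  simp [symmDiff_def]

theorem ncard_neighborSet_eq_degree [Fintype V] (G : SimpleGraph V) [DecidableRel G.Adj] (v : V) :
    (G.neighborSet v).ncard = G.degree v := by
  rw [← card_neighborSet_eq_degree, ← Nat.card_eq_fintype_card, Nat.card_coe_set_eq]

end SimpleGraph

section BiclusterEditing

open SimpleGraph

variable {V : Type*}

noncomputable def editCost (G H : SimpleGraph V) : ℕ := (G.edgeSet ∆ H.edgeSet).ncard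

theorem editCost_eq_card_edgeFinset [Fintype V] (G H : SimpleGraph V) [DecidableRel (G ∆ H).Adj] :
    editCost G H = #(G ∆ H).edgeFinset := by
  rw [editCost, ← edgeSet_symmDiff, Set.ncard_eq_toFinset_card']
  rfl

theorem BipartiteWith.symmDiff {G H : SimpleGraph V} {side : V → Bool}
    (hG : BipartiteWith G side) (hH : BipartiteWith H side) : BipartiteWith (G ∆ H) side := by
  intro x y hxy
  simp only [symmDiff_def, sup_adj, sdiff_adj] at hxy
  rcases hxy with ⟨hxy, -⟩ | ⟨hxy, -⟩
  exacts [hG x y hxy, hH x y hxy]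

theorem BipartiteWith.isBipartiteWith [Fintype V] {G : SimpleGraph V} {side : V → Bool}
    (hG : BipartiteWith G side) (b : Bool) :
    G.IsBipartiteWith ↑({x | side x = b} : Finset V) ↑({x | side x ≠ b} : Finset V) := by
  refine ⟨Set.disjoint_left.2 fun x hx hx' => ?_, fun x y hxy => ?_⟩
  · simp_all
  · have hne := hG x y hxy
    simp only [coe_filter, mem_univ, true_and, Set.mem_ofPred_eq]
    revert hne
    cases side x <;> cases side y <;> cases b <;> decide

theorem editCost_eq_sum [Fintype V] {G H : SimpleGraph V} {side : V → Bool}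
    (hG : BipartiteWith G side) (hH : BipartiteWith H side) (b : Bool) :
    editCost G H = ∑ x with side x = b, (G.neighborSet x ∆ H.neighborSet x).ncard := by
  classical
  rw [editCost_eq_card_edgeFinset,
    ← isBipartiteWith_sum_degrees_eq_card_edges ((hG.symmDiff hH).isBipartiteWith b)]
  simp_rw [← ncard_neighborSet_eq_degree, neighborSet_symmDiff]

theorem editCost_induce_add [Fintype V] (G H : SimpleGraph V) (u : V) :
    editCost (G.induce {v | v ≠ u}) (H.induce {v | v ≠ u})
      + (G.neighborSet u ∆ H.neighborSet u).ncard = editCost G H := by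
  classical
  have hdeg := (G ∆ H).degree_le_card_edgeFinset u
  have hdel := (G ∆ H).card_edgeFinset_induce_compl_singleton u
  rw [card_edgeFinset_deleteIncidenceSet] at hdel
  simp only [← Set.ncard_coe_finset, coe_edgeFinset, ← ncard_neighborSet_eq_degree] at hdel hdeg
  have hdel' : ((G ∆ H).induce {v | v ≠ u}).edgeSet.ncard
      = (G ∆ H).edgeSet.ncard - ((G ∆ H).neighborSet u).ncard := hdel
  rw [editCost, editCost, ← edgeSet_symmDiff, ← edgeSet_symmDiff, ← induce_symmDiff,
    ← neighborSet_symmDiff, hdel']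
  omega

section Clustering

variable {L : Type*}

def clusterGraph (lab : V → L) (side : V → Bool) : SimpleGraph V where
  Adj x y := lab x = lab y ∧ side x ≠ side y
  symm := ⟨fun _ _ h => ⟨h.1.symm, h.2.symm⟩⟩
  loopless := ⟨fun _ h => h.2 rfl⟩

@[simp]
theorem clusterGraph_adj {lab : V → L} {side : V → Bool} {x y : V} :
    (clusterGraph lab side).Adj x y ↔ lab x = lab y ∧ side x ≠ side y :=
  Iff.rfl

theorem biclustering_clusterGraph (lab : V → L) (side : V → Bool) :
    Biclustering (clusterGraph lab side) side := by
  refine ⟨fun x y h => h.2, fun x y hxy hside => ⟨?_, hside⟩⟩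
  obtain ⟨w⟩ := hxy
  clear hside
  induction w with
  | nil => rfl
  | cons h _ ih => exact h.1.trans ih

theorem neighborSet_clusterGraph_eq_of_eq {lab : V → L} {side : V → Bool} {x x' : V}
    (hlab : lab x = lab x') (hside : side x = side x') :
    (clusterGraph lab side).neighborSet x = (clusterGraph lab side).neighborSet x' := by
  ext y
  simp [hlab, hside]

theorem disjoint_neighborSet_clusterGraph {lab : V → L} {side : V → Bool} {x x' : V}
    (hlab : lab x ≠ lab x') :
    Disjoint ((clusterGraph lab side).neighborSet x) ((clusterGraph lab side).neighborSet x') :=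
  Set.disjoint_left.2 fun _ hy hy' => hlab (hy.1.trans hy'.1.symm)

theorem Biclustering.eq_clusterGraph {B : SimpleGraph V} {side : V → Bool}
    (hB : Biclustering B side) : B = clusterGraph B.connectedComponentMk side := by
  ext x y
  exact ⟨fun h => ⟨ConnectedComponent.sound h.reachable, hB.1 x y h⟩,
    fun h => hB.2 x y (ConnectedComponent.exact h.1) h.2⟩

theorem Biclustering.induce {B : SimpleGraph V} {side : V → Bool} (hB : Biclustering B side)
    (s : Set V) : Biclustering (B.induce s) (fun v => side v.1) := by
  rw [hB.eq_clusterGraph]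
  exact biclustering_clusterGraph (fun v : s => B.connectedComponentMk v.1) _

theorem Biclustering.exists_induce_eq {side : V → Bool} {s : Set V} {B' : SimpleGraph s}
    (hB' : Biclustering B' (fun v => side v.1)) :
    ∃ B : SimpleGraph V, Biclustering B side ∧ B.induce s = B' := by
  classical
  let lab v := if h : v ∈ s then some (B'.connectedComponentMk ⟨v, h⟩) else none
  refine ⟨clusterGraph lab side, biclustering_clusterGraph _ _, ?_⟩
  conv_rhs => rw [hB'.eq_clusterGraph]
  ext x y
  simp [lab]

open Classical in
noncomputable def collapseLabels (A : Set V) (lab : V → L) : V → Option L :=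
  fun v => if v ∈ A then none else some (lab v)

variable {A N : Set V} {lab : V → L} {side : V → Bool} {b : Bool} {x : V}

theorem neighborSet_clusterGraph_collapseLabels_of_mem
    (hA : ∀ y, side y ≠ b → (y ∈ A ↔ y ∈ N)) (hN : ∀ y ∈ N, side y ≠ b)
    (hx : side x = b) (hxA : x ∈ A) :
    (clusterGraph (collapseLabels A lab) side).neighborSet x = N := by
  ext y
  have := hA y
  have := hN y
  simp only [mem_neighborSet, clusterGraph_adj, collapseLabels, hxA, hx]
  split_ifs <;> grind

theorem neighborSet_clusterGraph_collapseLabels_of_notMem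
    (hA : ∀ y, side y ≠ b → (y ∈ A ↔ y ∈ N)) (hx : side x = b) (hxA : x ∉ A) :
    (clusterGraph (collapseLabels A lab) side).neighborSet x
      = (clusterGraph lab side).neighborSet x \ N := by
  ext y
  have := hA y
  simp only [mem_neighborSet, clusterGraph_adj, collapseLabels, hxA, hx, Set.mem_sdiff]
  split_ifs <;> grind

theorem ncard_symmDiff_neighborSet_collapseLabels_le [Finite V]
    (hA : ∀ y, side y ≠ b → (y ∈ A ↔ y ∈ N)) (hN : ∀ y ∈ N, side y ≠ b) {r : V}
    (hx : side x = b) (hr : side r = b) (hxA : x ∈ A ↔ lab x = lab r) (S : Set V) :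
    (S ∆ (clusterGraph (collapseLabels A lab) side).neighborSet x).ncard
      ≤ (S ∆ (clusterGraph lab side).neighborSet x).ncard
        + (N ∆ (clusterGraph lab side).neighborSet r).ncard := by
  by_cases hlab : lab x = lab r
  · rw [neighborSet_clusterGraph_collapseLabels_of_mem hA hN hx (hxA.2 hlab),
      neighborSet_clusterGraph_eq_of_eq hlab (hx.trans hr.symm), symmDiff_comm N]
    exact Set.ncard_symmDiff_le_add _ _ _
  · rw [neighborSet_clusterGraph_collapseLabels_of_notMem hA hx (mt hxA.1 hlab)]
    refine (Set.ncard_symmDiff_sdiff_le _ _ _).trans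
      (add_le_add_right (Set.ncard_le_ncard (fun y hy => ?_) (Set.toFinite _)) _)
    obtain ⟨hyx, hyN⟩ := hy
    exact Set.mem_symmDiff.2
      (Or.inl ⟨hyN, Set.disjoint_left.1 (disjoint_neighborSet_clusterGraph hlab) hyx⟩)

end Clustering

def secondNeighborSet (G : SimpleGraph V) (u : V) : Set V :=
  ⋃ s ∈ G.neighborSet u, G.neighborSet s

theorem BipartiteWith.side_eq_of_mem_secondNeighborSet {G : SimpleGraph V} {side : V → Bool}
    {u x : V} (hG : BipartiteWith G side) (hx : x ∈ secondNeighborSet G u) : side x = side u := by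
  obtain ⟨s, hus, hsx⟩ := Set.mem_iUnion₂.1 hx
  have h1 := hG u s hus
  have h2 := hG s x hsx
  revert h1 h2
  cases side u <;> cases side s <;> cases side x <;> decide

def twinClass (G : SimpleGraph V) (side : V → Bool) (u : V) : Set V :=
  {w | side w = side u ∧ G.neighborSet w = G.neighborSet u}

theorem biUnion_neighborSet_twinClass (G : SimpleGraph V) (side : V → Bool) (u : V) :
    ⋃ r ∈ twinClass G side u, G.neighborSet r = G.neighborSet u :=
  subset_antisymm (Set.iUnion₂_subset fun _ hr => hr.2.le)
    (Set.subset_biUnion_of_mem (u := G.neighborSet) (⟨rfl, rfl⟩ : u ∈ twinClass G side u))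

section TwinCollapse

variable {L : Type*} {G : SimpleGraph V} {side : V → Bool} {u x : V} {lab : V → L}
  {φ : V → V}

def twinCollapseSet (G : SimpleGraph V) (side : V → Bool) (u : V) (lab : V → L) (φ : V → V) :
    Set V :=
  twinClass G side u ∪ G.neighborSet u ∪
    {x | x ∈ secondNeighborSet G u \ twinClass G side u ∧ lab x = lab (φ x)}

noncomputable def twinCollapse (G : SimpleGraph V) (side : V → Bool) (u : V) (lab : V → L)
    (φ : V → V) : SimpleGraph V :=
  clusterGraph (collapseLabels (twinCollapseSet G side u lab φ) lab) side

theorem BipartiteWith.mem_twinCollapseSet_iff_of_side_ne (hG : BipartiteWith G side) {y : V}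
    (hy : side y ≠ side u) : y ∈ twinCollapseSet G side u lab φ ↔ y ∈ G.neighborSet u := by
  have := mt hG.side_eq_of_mem_secondNeighborSet hy
  simp only [twinCollapseSet, twinClass, Set.mem_union, Set.mem_ofPred_eq, Set.mem_sdiff]
  tauto

theorem BipartiteWith.mem_twinCollapseSet_iff_of_side_eq (hG : BipartiteWith G side)
    (hx : side x = side u) :
    x ∈ twinCollapseSet G side u lab φ ↔ x ∈ twinClass G side u
      ∨ x ∈ secondNeighborSet G u \ twinClass G side u ∧ lab x = lab (φ x) := by
  have : x ∉ G.neighborSet u := fun h => hG u x h hx.symm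
  simp only [twinCollapseSet, Set.mem_union, Set.mem_ofPred_eq]
  tauto

theorem BipartiteWith.neighborSet_twinCollapse_of_mem_twinClass (hG : BipartiteWith G side)
    (hx : x ∈ twinClass G side u) :
    (twinCollapse G side u lab φ).neighborSet x = G.neighborSet x := by
  rw [twinCollapse, neighborSet_clusterGraph_collapseLabels_of_mem
    (fun _ => hG.mem_twinCollapseSet_iff_of_side_ne) (fun y hy => (hG u y hy).symm) hx.1
    (Or.inl (Or.inl hx)), hx.2]

theorem BipartiteWith.ncard_symmDiff_twinCollapse_le_add [Finite V] (hG : BipartiteWith G side)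
    (hx : x ∈ secondNeighborSet G u \ twinClass G side u) (hφx : φ x ∈ twinClass G side u) :
    (G.neighborSet x ∆ (twinCollapse G side u lab φ).neighborSet x).ncard
      ≤ (G.neighborSet x ∆ (clusterGraph lab side).neighborSet x).ncard
        + (G.neighborSet (φ x) ∆ (clusterGraph lab side).neighborSet (φ x)).ncard := by
  have hxs := hG.side_eq_of_mem_secondNeighborSet hx.1
  have hxA : x ∈ twinCollapseSet G side u lab φ ↔ lab x = lab (φ x) := by
    simp [hG.mem_twinCollapseSet_iff_of_side_eq hxs, hx, hx.2]
  rw [hφx.2, twinCollapse]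
  exact ncard_symmDiff_neighborSet_collapseLabels_le
    (fun _ => hG.mem_twinCollapseSet_iff_of_side_ne) (fun y hy => (hG u y hy).symm) hxs hφx.1 hxA _

theorem BipartiteWith.ncard_symmDiff_twinCollapse_le [Finite V] (hG : BipartiteWith G side)
    (hx : side x = side u) (hxR : x ∉ twinClass G side u) (hxW : x ∉ secondNeighborSet G u) :
    (G.neighborSet x ∆ (twinCollapse G side u lab φ).neighborSet x).ncard
      ≤ (G.neighborSet x ∆ (clusterGraph lab side).neighborSet x).ncard := by
  have hxA : x ∉ twinCollapseSet G side u lab φ := by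
    simp [hG.mem_twinCollapseSet_iff_of_side_eq hx, hxR, hxW]
  rw [twinCollapse, neighborSet_clusterGraph_collapseLabels_of_notMem
    (fun _ => hG.mem_twinCollapseSet_iff_of_side_ne) hx hxA]
  refine Set.ncard_symmDiff_sdiff_le_of_disjoint _ _ _ (Set.disjoint_left.2 fun y hxy huy => ?_)
  exact hxW (Set.mem_iUnion₂.2 ⟨y, huy, hxy.symm⟩)

end TwinCollapse

/-- By `editCost_induce_add`, the bound says that `B` costs at most what `clusterGraph lab side`
costs on `G - u`. -/
theorem exists_biclustering_editCost_add_le [Fintype V] {L : Type*} {G : SimpleGraph V}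
    {side : V → Bool} {u : V} (hG : BipartiteWith G side) (lab : V → L)
    (hcard : (secondNeighborSet G u \ twinClass G side u).ncard < (twinClass G side u).ncard) :
    ∃ B, Biclustering B side ∧
      editCost G B + (G.neighborSet u ∆ (clusterGraph lab side).neighborSet u).ncard
        ≤ editCost G (clusterGraph lab side) := by
  classical
  set R := twinClass G side u
  set W := secondNeighborSet G u \ R
  have huR : u ∈ R := ⟨rfl, rfl⟩
  obtain ⟨φ, hφW, hφinj⟩ := Set.exists_injOn_sdiff_singleton_of_ncard_lt hcard huR
  have hB : Biclustering (twinCollapse G side u lab φ) side := biclustering_clusterGraph _ _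
  refine ⟨twinCollapse G side u lab φ, hB, ?_⟩
  rw [editCost_eq_sum hG hB.1 (side u),
    editCost_eq_sum hG (biclustering_clusterGraph _ _).1 (side u)]
  refine sum_add_le_sum_of_charging (R := R.toFinset) (W := W.toFinset) (φ := φ)
    (g := fun x => (G.neighborSet x ∆ (clusterGraph lab side).neighborSet x).ncard) ?_ ?_
    (Set.disjoint_toFinset.2 Set.disjoint_sdiff_right) (Set.mem_toFinset.2 huR)
    (by simpa using hφinj) ?_ ?_ ?_ ?_
  · intro x hx
    simpa using (Set.mem_toFinset.1 hx).1
  · intro x hx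
    simpa using hG.side_eq_of_mem_secondNeighborSet (Set.mem_toFinset.1 hx).1
  · intro x hx
    obtain ⟨hφR, hφu⟩ := hφW (Set.mem_toFinset.1 hx)
    exact Finset.mem_erase.2 ⟨hφu, Set.mem_toFinset.2 hφR⟩
  · intro x hx
    rw [hG.neighborSet_twinCollapse_of_mem_twinClass (Set.mem_toFinset.1 hx), symmDiff_self,
      Set.bot_eq_empty, Set.ncard_empty]
  · intro x hx
    rw [Set.mem_toFinset] at hx
    exact hG.ncard_symmDiff_twinCollapse_le_add hx (hφW hx).1
  · intro x hx hxR hxW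
    rw [Set.mem_toFinset] at hxR hxW
    exact hG.ncard_symmDiff_twinCollapse_le (by simpa using hx) hxR fun h => hxW ⟨h, hxR⟩

end BiclusterEditing

theorem stmt_4_general {V : Type*} [Fintype V]
    (G : SimpleGraph V) (side : V → Bool) (hG : BipartiteWith G side)
    (u : V) (R : Set V)
    (hR : R = {w | side w = side u ∧ G.neighborSet w = G.neighborSet u})
    (hcard : ((⋃ s ∈ ⋃ r ∈ R, G.neighborSet r, G.neighborSet s) \ R).ncard < R.ncard)
    (k : ℕ) :
    (∃ B : SimpleGraph V, Biclustering B side ∧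
        (symmDiff G.edgeSet B.edgeSet).ncard ≤ k) ↔
    (∃ B' : SimpleGraph {v : V // v ≠ u}, Biclustering B' (fun v => side v.1) ∧
        (symmDiff (G.induce {v : V | v ≠ u}).edgeSet B'.edgeSet).ncard ≤ k) := by
  obtain rfl : R = twinClass G side u := hR
  rw [biUnion_neighborSet_twinClass] at hcard
  constructor
  · rintro ⟨B, hB, hk⟩
    refine ⟨B.induce {v | v ≠ u}, hB.induce _, ?_⟩
    have := editCost_induce_add G B u
    change editCost _ _ ≤ k at hk ⊢
    omega
  · rintro ⟨B', hB', hk⟩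
    obtain ⟨B₀, hB₀, rfl⟩ := hB'.exists_induce_eq (s := {v | v ≠ u})
    obtain ⟨B, hB, hcost⟩ :=
      exists_biclustering_editCost_add_le hG B₀.connectedComponentMk hcard
    rw [← hB₀.eq_clusterGraph, ← editCost_induce_add G B₀ u] at hcost
    refine ⟨B, hB, ?_⟩
    change editCost _ _ ≤ k at hk ⊢
    omega

theorem stmt_4 {V : Type*} [Fintype V] [DecidableEq V]
    (G : SimpleGraph V) (side : V → Bool) (hG : BipartiteWith G side)
    (u : V) (R : Set V)
    (hR : R = {w | side w = side u ∧ G.neighborSet w = G.neighborSet u})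
    (hcard : ((⋃ s ∈ ⋃ r ∈ R, G.neighborSet r, G.neighborSet s) \ R).ncard < R.ncard)
    (k : ℕ) :
    (∃ B : SimpleGraph V, Biclustering B side ∧
        (symmDiff G.edgeSet B.edgeSet).ncard ≤ k) ↔
    (∃ B' : SimpleGraph {v : V // v ≠ u}, Biclustering B' (fun v => side v.1) ∧
        (symmDiff (G.induce {v : V | v ≠ u}).edgeSet B'.edgeSet).ncard ≤ k) :=
  stmt_4_general G side hG u R hR hcard k
end

section
/- Let k ∈ ℕ, b > 1 real, c, c₀, …, c_{k−1} non-negative reals with 0 < c < k, and 0 < ε ≤ k − c. Define f(a) = a^k − Σ_{j=0}^{k−1} c_j a^j − b^c a^{k−c} and f*(a) = a^k − Σ_{j=0}^{k−1} c_j a^j − b^{c+ε} a^{k−c−ε}. Then the largest real root of f* is at most the largest real root of f (both have a real root, and lrr(f) ≥ b). -/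
/-! Both `f` and `f*` are continuous, nonpositive at `b` and positive for large `a`, so their
zero sets are closed, nonempty and bounded above, with maxima `≥ b`. Past `lrr(f)` the function
`f` is positive, and `f* ≥ f` on `[b, ∞)` because `b ^ ε ≤ a ^ ε` there; hence `f*` has no zero
past `lrr(f)`. -/

open Finset

/-- The paper's `f` is `fPoly k c b cj` and its `f*` is `fPoly k (c + ε) b cj`. -/
def fPoly (k d : ℕ) (b : ℝ) (cj : ℕ → ℝ) (a : ℝ) : ℝ :=
  a ^ k - (∑ j ∈ range k, cj j * a ^ j) - b ^ d * a ^ (k - d)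

lemma continuous_fPoly (k d : ℕ) (b : ℝ) (cj : ℕ → ℝ) : Continuous (fPoly k d b cj) := by
  unfold fPoly
  fun_prop

lemma fPoly_self_nonpos {k d : ℕ} {b : ℝ} {cj : ℕ → ℝ} (hb : 0 ≤ b) (hdk : d ≤ k)
    (hcj : ∀ j, 0 ≤ cj j) : fPoly k d b cj b ≤ 0 := by
  have hpow : b ^ d * b ^ (k - d) = b ^ k := by rw [← pow_add, Nat.add_sub_cancel' hdk]
  have hsum : 0 ≤ ∑ j ∈ range k, cj j * b ^ j :=
    sum_nonneg fun j _ => mul_nonneg (hcj j) (pow_nonneg hb j)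
  rw [fPoly, hpow]
  linarith

lemma exists_forall_ge_fPoly_pos {k d : ℕ} (b : ℝ) (cj : ℕ → ℝ) (hd : 0 < d) (hdk : d ≤ k) :
    ∃ M, ∀ a, M ≤ a → 0 < fPoly k d b cj a := by
  set C := ∑ j ∈ range k, |cj j|
  refine ⟨1 + C + |b ^ d|, fun a ha => ?_⟩
  have hC : 0 ≤ C := sum_nonneg fun j _ => abs_nonneg (cj j)
  have ha1 : 1 ≤ a := by linarith [abs_nonneg (b ^ d)]
  have hsum : ∑ j ∈ range k, cj j * a ^ j ≤ C * a ^ (k - 1) := by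
    rw [sum_mul]
    refine sum_le_sum fun j hj => ?_
    have hjk : j ≤ k - 1 := by have := mem_range.mp hj; omega
    calc cj j * a ^ j ≤ |cj j| * a ^ j :=
          mul_le_mul_of_nonneg_right (le_abs_self _) (by positivity)
      _ ≤ |cj j| * a ^ (k - 1) :=
          mul_le_mul_of_nonneg_left (pow_le_pow_right₀ ha1 hjk) (abs_nonneg _)
  have hlead : b ^ d * a ^ (k - d) ≤ |b ^ d| * a ^ (k - 1) :=
    calc b ^ d * a ^ (k - d) ≤ |b ^ d| * a ^ (k - d) :=
          mul_le_mul_of_nonneg_right (le_abs_self _) (by positivity)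
      _ ≤ |b ^ d| * a ^ (k - 1) :=
          mul_le_mul_of_nonneg_left (pow_le_pow_right₀ ha1 (by omega)) (abs_nonneg _)
  have hak : a ^ k = a * a ^ (k - 1) := by rw [← pow_succ', Nat.sub_add_cancel (by omega)]
  have hpos : 0 < a ^ (k - 1) := by positivity
  rw [fPoly, hak]
  nlinarith

lemma exists_zero_ge_of_nonpos {g : ℝ → ℝ} (hg : Continuous g) {M : ℝ}
    (hM : ∀ a, M ≤ a → 0 < g a) {t : ℝ} (ht : g t ≤ 0) : ∃ z, t ≤ z ∧ g z = 0 := by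
  obtain ⟨z, hz, hz0⟩ := intermediate_value_Icc (le_max_left t M) hg.continuousOn
    ⟨ht, (hM _ (le_max_right t M)).le⟩
  exact ⟨z, hz.1, hz0⟩

lemma exists_isGreatest_zero {g : ℝ → ℝ} (hg : Continuous g) {M : ℝ}
    (hM : ∀ a, M ≤ a → 0 < g a) {b : ℝ} (hb : g b ≤ 0) :
    ∃ x, IsGreatest {a | g a = 0} x ∧ b ≤ x ∧ ∀ t, x < t → 0 < g t := by
  set S := {a | g a = 0}
  obtain ⟨z, hbz, hz⟩ := exists_zero_ge_of_nonpos hg hM hb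
  have hbdd : BddAbove S := ⟨M, fun a ha => not_lt.1 fun h => (hM a h.le).ne' ha⟩
  refine ⟨sSup S, ⟨(isClosed_eq hg continuous_const).csSup_mem ⟨z, hz⟩ hbdd,
    fun a ha => le_csSup hbdd ha⟩, hbz.trans (le_csSup hbdd hz), fun t ht => ?_⟩
  by_contra! hgt
  obtain ⟨w, htw, hw⟩ := exists_zero_ge_of_nonpos hg hM hgt
  exact (ht.trans_le htw).not_ge (le_csSup hbdd hw)

lemma fPoly_le_fPoly_add_of_le {k c ε : ℕ} {b : ℝ} (cj : ℕ → ℝ) (hb : 0 ≤ b) (hcεk : c + ε ≤ k)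
    {y : ℝ} (hby : b ≤ y) : fPoly k c b cj y ≤ fPoly k (c + ε) b cj y := by
  have hy : y ^ (k - c) = y ^ ε * y ^ (k - (c + ε)) := by rw [← pow_add]; congr 1; omega
  have hlead : b ^ (c + ε) * y ^ (k - (c + ε)) ≤ b ^ c * y ^ (k - c) := by
    have : 0 ≤ y := hb.trans hby
    rw [pow_add, hy, mul_assoc]
    gcongr
  unfold fPoly
  linarith

theorem stmt_9_general (k c ε : ℕ) (b : ℝ) (cj : ℕ → ℝ)
    (hb : 1 < b) (hc : 0 < c) (hck : c < k) (hεk : ε ≤ k - c)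
    (hcj : ∀ j, 0 ≤ cj j) :
    ∃ x : ℝ,
      IsGreatest {a : ℝ | a ^ k - (∑ j ∈ Finset.range k, cj j * a ^ j) -
        b ^ c * a ^ (k - c) = 0} x ∧
      b ≤ x ∧
      ∃ y : ℝ,
        IsGreatest {a : ℝ | a ^ k - (∑ j ∈ Finset.range k, cj j * a ^ j) -
          b ^ (c + ε) * a ^ (k - (c + ε)) = 0} y ∧
        y ≤ x := by
  have hb0 : 0 ≤ b := by linarith
  have hcεk : c + ε ≤ k := by omega
  obtain ⟨M, hM⟩ := exists_forall_ge_fPoly_pos b cj hc hck.le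
  obtain ⟨M', hM'⟩ := exists_forall_ge_fPoly_pos b cj (Nat.add_pos_left hc ε) hcεk
  obtain ⟨x, hx, hbx, hfx⟩ := exists_isGreatest_zero (continuous_fPoly k c b cj) hM
    (fPoly_self_nonpos hb0 hck.le hcj)
  obtain ⟨y, hy, hby, -⟩ := exists_isGreatest_zero (continuous_fPoly k (c + ε) b cj) hM'
    (fPoly_self_nonpos hb0 hcεk hcj)
  refine ⟨x, hx, hbx, y, hy, not_lt.1 fun hxy => ?_⟩
  have hy0 : fPoly k (c + ε) b cj y = 0 := hy.1
  linarith [hfx y hxy, fPoly_le_fPoly_add_of_le cj hb0 hcεk (hbx.trans hxy.le)]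

theorem stmt_9 (k c ε : ℕ) (b : ℝ) (cj : ℕ → ℝ)
    (hb : 1 < b) (hc : 0 < c) (hck : c < k) (hε : 0 < ε) (hεk : ε ≤ k - c)
    (hcj : ∀ j, 0 ≤ cj j) :
    ∃ x : ℝ,
      IsGreatest {a : ℝ | a ^ k - (∑ j ∈ Finset.range k, cj j * a ^ j) -
        b ^ c * a ^ (k - c) = 0} x ∧
      b ≤ x ∧
      ∃ y : ℝ,
        IsGreatest {a : ℝ | a ^ k - (∑ j ∈ Finset.range k, cj j * a ^ j) -
          b ^ (c + ε) * a ^ (k - (c + ε)) = 0} y ∧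
        y ≤ x :=
  stmt_9_general k c ε b cj hb hc hck hεk hcj
end

section
/- For positive integers c and d, let lrr(c, d) denote the largest real root of the polynomial a^k − 2^c a^{k−c} − 2^d a^{k−d} (for fixed k > max(c, d), c ≠ d or with multiplicity; equivalently the largest real root of a^{max(c,d)} − 2^c a^{max(c,d)−c} − 2^d a^{max(c,d)−d} after dividing by a power of a). Then lrr(c, d) ≥ lrr(c + 1, d) and lrr(c, d) ≥ lrr(c, d + 1). -/
/-! For `a ≥ 2` one has `2^(c+1) a^(k-c-1) ≤ 2^c a^(k-c)`, so on `[2, ∞)` raising `c` (or, by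
symmetry, `d`) can only increase `a^k - 2^c a^(k-c) - 2^d a^(k-d)`. The new function is nonpositive
at `2`, so its largest root `y` is at least `2`; the old function is then nonpositive at `y` and, since
it tends to `+∞`, has a root at or beyond `y`. -/

open Filter Polynomial

lemma tendsto_pow_sub_mul_pow_sub_mul_pow_atTop {k m n : ℕ} (hm : m < k) (hn : n < k) (A B : ℝ) :
    Tendsto (fun a : ℝ => a ^ k - A * a ^ m - B * a ^ n) atTop atTop := by
  set P : ℝ[X] := X ^ k - C A * X ^ m - C B * X ^ n with hP
  have hdeg : P.natDegree = k := by
    rw [hP]; compute_degree <;> first | omega | simp [hm.ne', hn.ne']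
  have hlead : P.leadingCoeff = 1 := by
    rw [leadingCoeff, hdeg, hP]; simp [coeff_X_pow, hm.ne', hn.ne']
  have hP_top := tendsto_atTop_of_leadingCoeff_nonneg P
    (by rw [← natDegree_pos_iff_degree_pos, hdeg]; omega) (by rw [hlead]; exact zero_le_one)
  convert hP_top using 2 with a
  simp [hP]

lemma exists_ge_eq_zero_of_tendsto_atTop {f : ℝ → ℝ} (hf : Continuous f)
    (htop : Tendsto f atTop atTop) {t : ℝ} (ht : f t ≤ 0) : ∃ r, t ≤ r ∧ f r = 0 :=
  intermediate_value_Ici hf.continuousOn htop ht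

def lrrPoly (k c d : ℕ) (a : ℝ) : ℝ :=
  a ^ k - 2 ^ c * a ^ (k - c) - 2 ^ d * a ^ (k - d)

section lrrPoly

variable {k c d : ℕ}

lemma lrrPoly_comm (k c d : ℕ) : lrrPoly k c d = lrrPoly k d c := by
  funext a; unfold lrrPoly; ring

lemma lrrPoly_two_nonpos (hck : c ≤ k) : lrrPoly k c d 2 ≤ 0 := by
  have h2k : (2 : ℝ) ^ c * 2 ^ (k - c) = 2 ^ k := by rw [← pow_add, Nat.add_sub_cancel' hck]
  have : (0 : ℝ) ≤ 2 ^ d * 2 ^ (k - d) := by positivity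
  rw [lrrPoly, h2k]; linarith

lemma lrrPoly_le_lrrPoly_succ_left (hck : c + 1 ≤ k) {a : ℝ} (ha : 2 ≤ a) :
    lrrPoly k c d a ≤ lrrPoly k (c + 1) d a := by
  have hsplit : a ^ (k - c) = a ^ (k - (c + 1)) * a := by rw [← pow_succ]; congr 1; omega
  have hterm : 2 ^ (c + 1) * a ^ (k - (c + 1)) ≤ 2 ^ c * a ^ (k - c) :=
    calc 2 ^ (c + 1) * a ^ (k - (c + 1)) = 2 ^ c * a ^ (k - (c + 1)) * 2 := by ring
      _ ≤ 2 ^ c * a ^ (k - (c + 1)) * a := by gcongr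
      _ = 2 ^ c * a ^ (k - c) := by rw [hsplit]; ring
  unfold lrrPoly; linarith

lemma exists_lrrPoly_root_ge (hc : 1 ≤ c) (hd : 1 ≤ d) (hk : 1 ≤ k) {t : ℝ}
    (ht : lrrPoly k c d t ≤ 0) : ∃ r, t ≤ r ∧ lrrPoly k c d r = 0 :=
  exists_ge_eq_zero_of_tendsto_atTop (by fun_prop)
    (tendsto_pow_sub_mul_pow_sub_mul_pow_atTop (by omega) (by omega) _ _) ht

lemma isGreatest_root_succ_left_le (hc : 1 ≤ c) (hd : 1 ≤ d) (hck : c + 1 ≤ k) {x y : ℝ}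
    (hx : IsGreatest {a | lrrPoly k c d a = 0} x)
    (hy : IsGreatest {a | lrrPoly k (c + 1) d a = 0} y) : y ≤ x := by
  obtain ⟨r, h2r, hr⟩ := exists_lrrPoly_root_ge (by omega) hd (by omega) (lrrPoly_two_nonpos hck)
  have h2y : 2 ≤ y := h2r.trans (hy.2 hr)
  have hy_nonpos : lrrPoly k c d y ≤ 0 := (lrrPoly_le_lrrPoly_succ_left hck h2y).trans hy.1.le
  obtain ⟨s, hys, hs⟩ := exists_lrrPoly_root_ge hc hd (by omega) hy_nonpos
  exact hys.trans (hx.2 hs)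

lemma isGreatest_root_succ_right_le (hc : 1 ≤ c) (hd : 1 ≤ d) (hdk : d + 1 ≤ k) {x y : ℝ}
    (hx : IsGreatest {a | lrrPoly k c d a = 0} x)
    (hy : IsGreatest {a | lrrPoly k c (d + 1) a = 0} y) : y ≤ x := by
  rw [lrrPoly_comm] at hx hy
  exact isGreatest_root_succ_left_le hd hc hdk hx hy

end lrrPoly

theorem stmt_10 (k c d : ℕ) (hc : 1 ≤ c) (hd : 1 ≤ d)
    (hck : c + 1 < k) (hdk : d + 1 < k)
    (x x₁ x₂ : ℝ)
    (hx : IsGreatest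
      {a : ℝ | a ^ k - 2 ^ c * a ^ (k - c) - 2 ^ d * a ^ (k - d) = 0} x)
    (hx₁ : IsGreatest
      {a : ℝ | a ^ k - 2 ^ (c + 1) * a ^ (k - (c + 1)) - 2 ^ d * a ^ (k - d) = 0} x₁)
    (hx₂ : IsGreatest
      {a : ℝ | a ^ k - 2 ^ c * a ^ (k - c) - 2 ^ (d + 1) * a ^ (k - (d + 1)) = 0} x₂) :
    x₁ ≤ x ∧ x₂ ≤ x :=
  ⟨isGreatest_root_succ_left_le hc hd hck.le hx hx₁,
    isGreatest_root_succ_right_le hc hd hdk.le hx hx₂⟩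
end

section
/- For every bipartite graph G, there exists an optimal biclustering 𝓑 of G such that for every vertex v: either exactly deg_G(v) modified edges contain v and all of them are deletions (i.e., v is isolated in 𝓑 relative to its original edges), or at most deg_G(v) − 1 modified edges contain v. -/
/-! Among the optimal biclusterings take one with the fewest edges. Isolating a vertex `v` in a
biclustering gives a biclustering in which the modified edges at `v` are exactly the `deg v`
deletions at `v`, so optimality allows at most `deg v` modified edges at `v`. If there are exactly
`deg v`, the isolated version is optimal as well, so by edge-minimality `v` is already isolated
and every modified edge at `v` is a deletion. -/

open SimpleGraph

namespace Biclustering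

variable {V : Type*} {B : SimpleGraph V} {side : V → Bool}

lemma deleteIncidenceSet (hB : Biclustering B side) (v : V) :
    Biclustering (B.deleteIncidenceSet v) side := by
  have not_reachable_of_ne {u : V} (hu : u ≠ v) : ¬(B.deleteIncidenceSet v).Reachable v u := by
    rintro ⟨_ | ⟨h, _⟩⟩
    · exact hu rfl
    · exact (deleteIncidenceSet_adj.mp h).2.1 rfl
  refine ⟨fun u w h ↦ hB.1 u w (deleteIncidenceSet_le B v h), fun u w huw hs ↦ ?_⟩
  have hu : u ≠ v := fun h ↦ by subst h; exact not_reachable_of_ne (fun h ↦ hs (h ▸ rfl)) huw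
  have hw : w ≠ v := fun h ↦ by subst h; exact not_reachable_of_ne hu huw.symm
  exact deleteIncidenceSet_adj.mpr ⟨hB.2 u w (huw.mono (deleteIncidenceSet_le B v)) hs, hu, hw⟩

end Biclustering

section Modification

variable {V : Type*}

lemma symmDiff_edgeSet_deleteIncidenceSet (G B : SimpleGraph V) (v : V) :
    symmDiff G.edgeSet (B.deleteIncidenceSet v).edgeSet =
      {e ∈ symmDiff G.edgeSet B.edgeSet | v ∉ e} ∪ G.incidenceSet v := by
  ext e
  by_cases hv : v ∈ e <;>
    simp [edgeSet_deleteIncidenceSet, incidenceSet, Set.mem_symmDiff, hv]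

lemma ncard_symmDiff_edgeSet_deleteIncidenceSet [Finite V] (G B : SimpleGraph V) (v : V) :
    (symmDiff G.edgeSet (B.deleteIncidenceSet v).edgeSet).ncard +
        {e ∈ symmDiff G.edgeSet B.edgeSet | v ∈ e}.ncard =
      (symmDiff G.edgeSet B.edgeSet).ncard + (G.neighborSet v).ncard := by
  classical
  have hdisj : Disjoint {e ∈ symmDiff G.edgeSet B.edgeSet | v ∉ e} (G.incidenceSet v) :=
    Set.disjoint_left.mpr fun _ he he' ↦ he.2 he'.2
  have hdeg : (G.incidenceSet v).ncard = (G.neighborSet v).ncard :=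
    Nat.card_congr (G.incidenceSetEquivNeighborSet v)
  have hsplit : {e ∈ symmDiff G.edgeSet B.edgeSet | v ∈ e}.ncard +
      {e ∈ symmDiff G.edgeSet B.edgeSet | v ∉ e}.ncard = (symmDiff G.edgeSet B.edgeSet).ncard :=
    Set.ncard_inter_add_ncard_sdiff_eq_ncard _ _
  rw [symmDiff_edgeSet_deleteIncidenceSet, Set.ncard_union_eq hdisj, hdeg]
  omega

lemma biclustering_bot (side : V → Bool) : Biclustering (⊥ : SimpleGraph V) side :=
  ⟨fun _ _ h ↦ h.elim, fun _ _ h hs ↦ (hs (congrArg side (reachable_bot.mp h))).elim⟩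

lemma exists_optimal_biclustering_with_fewest_edges (G : SimpleGraph V) (side : V → Bool) :
    ∃ B : SimpleGraph V, Biclustering B side ∧ ∀ B' : SimpleGraph V, Biclustering B' side →
      (symmDiff G.edgeSet B.edgeSet).ncard ≤ (symmDiff G.edgeSet B'.edgeSet).ncard ∧
      ((symmDiff G.edgeSet B.edgeSet).ncard = (symmDiff G.edgeSet B'.edgeSet).ncard →
        B.edgeSet.ncard ≤ B'.edgeSet.ncard) := by
  obtain ⟨B, hB, hmin⟩ := exists_minimalFor_of_wellFoundedLT (Biclustering · side)
    (fun B ↦ toLex ((symmDiff G.edgeSet B.edgeSet).ncard, B.edgeSet.ncard))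
    ⟨⊥, biclustering_bot side⟩
  exact ⟨B, hB, fun B' hB' ↦ Prod.Lex.toLex_le_toLex'.mp ((le_total _ _).elim (hmin hB') id)⟩

section Optimal

variable [Finite V] {G B : SimpleGraph V} {side : V → Bool}

lemma ncard_modified_edges_le_ncard_neighborSet (hB : Biclustering B side)
    (hopt : ∀ B' : SimpleGraph V, Biclustering B' side →
      (symmDiff G.edgeSet B.edgeSet).ncard ≤ (symmDiff G.edgeSet B'.edgeSet).ncard) (v : V) :
    {e ∈ symmDiff G.edgeSet B.edgeSet | v ∈ e}.ncard ≤ (G.neighborSet v).ncard := by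
  have hcost := ncard_symmDiff_edgeSet_deleteIncidenceSet G B v
  have hle := hopt _ (hB.deleteIncidenceSet v)
  omega

lemma modified_edges_are_deletions_of_ncard_eq (hB : Biclustering B side)
    (hmin : ∀ B' : SimpleGraph V, Biclustering B' side →
      (symmDiff G.edgeSet B.edgeSet).ncard ≤ (symmDiff G.edgeSet B'.edgeSet).ncard ∧
      ((symmDiff G.edgeSet B.edgeSet).ncard = (symmDiff G.edgeSet B'.edgeSet).ncard →
        B.edgeSet.ncard ≤ B'.edgeSet.ncard))
    {v : V} (hv : {e ∈ symmDiff G.edgeSet B.edgeSet | v ∈ e}.ncard = (G.neighborSet v).ncard) :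
    ∀ e ∈ symmDiff G.edgeSet B.edgeSet, v ∈ e → e ∈ G.edgeSet ∧ e ∉ B.edgeSet := by
  have hcost := ncard_symmDiff_edgeSet_deleteIncidenceSet G B v
  have hsub : (B.deleteIncidenceSet v).edgeSet ⊆ B.edgeSet :=
    edgeSet_mono (deleteIncidenceSet_le B v)
  have hdel_eq : (B.deleteIncidenceSet v).edgeSet = B.edgeSet :=
    Set.eq_of_subset_of_ncard_le hsub ((hmin _ (hB.deleteIncidenceSet v)).2 (by omega))
  intro e he hve
  have heB : e ∉ B.edgeSet := fun he' ↦ by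
    rw [← hdel_eq, edgeSet_deleteIncidenceSet] at he'
    exact he'.2 ⟨he'.1, hve⟩
  exact ⟨((Set.mem_symmDiff.mp he).resolve_right fun h ↦ heB h.1).1, heB⟩

end Optimal

end Modification

theorem stmt_12_general {V : Type*} [Fintype V] (G : SimpleGraph V) (side : V → Bool) :
    ∃ B : SimpleGraph V, Biclustering B side ∧
      (∀ B' : SimpleGraph V, Biclustering B' side →
        (symmDiff G.edgeSet B.edgeSet).ncard ≤ (symmDiff G.edgeSet B'.edgeSet).ncard) ∧
      (∀ v : V,
        ({e ∈ symmDiff G.edgeSet B.edgeSet | v ∈ e}.ncard = (G.neighborSet v).ncard ∧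
          ∀ e ∈ symmDiff G.edgeSet B.edgeSet, v ∈ e →
            e ∈ G.edgeSet ∧ e ∉ B.edgeSet) ∨
        {e ∈ symmDiff G.edgeSet B.edgeSet | v ∈ e}.ncard ≤ (G.neighborSet v).ncard - 1) := by
  obtain ⟨B, hB, hmin⟩ := exists_optimal_biclustering_with_fewest_edges G side
  have hopt B' hB' := (hmin B' hB').1
  refine ⟨B, hB, hopt, fun v ↦ ?_⟩
  rcases (ncard_modified_edges_le_ncard_neighborSet hB hopt v).eq_or_lt with h | h
  · exact .inl ⟨h, modified_edges_are_deletions_of_ncard_eq hB hmin h⟩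
  · exact .inr (by omega)

theorem stmt_12 {V : Type*} [Fintype V] (G : SimpleGraph V) (side : V → Bool)
    (hG : BipartiteWith G side) :
    ∃ B : SimpleGraph V, Biclustering B side ∧
      (∀ B' : SimpleGraph V, Biclustering B' side →
        (symmDiff G.edgeSet B.edgeSet).ncard ≤ (symmDiff G.edgeSet B'.edgeSet).ncard) ∧
      (∀ v : V,
        ({e ∈ symmDiff G.edgeSet B.edgeSet | v ∈ e}.ncard = (G.neighborSet v).ncard ∧
          ∀ e ∈ symmDiff G.edgeSet B.edgeSet, v ∈ e →
            e ∈ G.edgeSet ∧ e ∉ B.edgeSet) ∨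
        {e ∈ symmDiff G.edgeSet B.edgeSet | v ∈ e}.ncard ≤ (G.neighborSet v).ncard - 1) :=
  stmt_12_general G side
end

section
/- Let G be a bipartite graph of minimum degree at least 2, let u ∈ V(G), and let v ∈ N(u). Let G′ be obtained from G by deleting every edge incident to u except uv. Then the connected component of G′ containing u is not a bicluster. -/
/-!
Follow a path `u – v – w – z` in `G′`: `w ≠ u` is a second neighbour of `v`, and `z ≠ v` a second
neighbour of `w`. Bipartiteness puts `w` on the side of `u`, so `z ≠ u` and `z` lies on the side
opposite to `u`. A bicluster would then contain the edge `uz`, but `v` is the only neighbour of `u`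
left in `G′`.
-/

namespace SimpleGraph

variable {V : Type*} {G : SimpleGraph V}

lemma exists_adj_ne_of_two_le_ncard_neighborSet {v : V} (h : 2 ≤ (G.neighborSet v).ncard)
    (a : V) : ∃ w, G.Adj v w ∧ w ≠ a :=
  Set.exists_ne_of_one_lt_ncard h a

lemma deleteEdges_image_mk_adj_iff {u : V} {S : Set V} {a b : V} :
    (G.deleteEdges ((fun w => s(u, w)) '' S)).Adj a b ↔
      G.Adj a b ∧ (a = u → b ∉ S) ∧ (b = u → a ∉ S) := by
  simp only [deleteEdges_adj, Set.mem_image, Sym2.eq_iff, not_exists, not_and]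
  constructor
  · rintro ⟨hab, hS⟩
    exact ⟨hab, fun hau hb => hS b hb (Or.inl ⟨hau.symm, rfl⟩),
      fun hbu ha => hS a ha (Or.inr ⟨hbu.symm, rfl⟩)⟩
  · rintro ⟨hab, ha, hb⟩
    refine ⟨hab, fun x hx => ?_⟩
    rintro (⟨rfl, rfl⟩ | ⟨rfl, rfl⟩)
    exacts [ha rfl hx, hb rfl hx]

end SimpleGraph

namespace BipartiteWith

variable {V : Type*} {G : SimpleGraph V} {side : V → Bool}

lemma side_eq_of_adj_of_adj (hG : BipartiteWith G side) {a b c : V} (hab : G.Adj a b)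
    (hbc : G.Adj b c) : side a = side c := by
  have h₁ := hG a b hab
  have h₂ := hG b c hbc
  revert h₁ h₂
  cases side a <;> cases side b <;> cases side c <;> decide

end BipartiteWith

open SimpleGraph in
theorem stmt_14 {V : Type*} (G : SimpleGraph V) (side : V → Bool)
    (hG : BipartiteWith G side)
    (hmin : ∀ w : V, 2 ≤ (G.neighborSet w).ncard)
    (u v : V) (huv : G.Adj u v)
    (G' : SimpleGraph V)
    (hG' : G' = G.deleteEdges ((fun w => s(u, w)) '' (G.neighborSet u \ {v}))) :
    ¬ (∀ x y, G'.Reachable u x → G'.Reachable u y → side x ≠ side y → G'.Adj x y) := by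
  intro hbiclique
  subst hG'
  have adj_iff (a b : V) := @deleteEdges_image_mk_adj_iff _ G u (G.neighborSet u \ {v}) a b
  obtain ⟨w, hvw, hwu⟩ := exists_adj_ne_of_two_le_ncard_neighborSet (hmin v) u
  obtain ⟨z, hwz, hzv⟩ := exists_adj_ne_of_two_le_ncard_neighborSet (hmin w) v
  have hsuw : side u = side w := hG.side_eq_of_adj_of_adj huv hvw
  have hsuz : side u ≠ side z := hsuw ▸ hG w z hwz
  have hzu : z ≠ u := by rintro rfl; exact hsuz rfl
  have huv' := (adj_iff u v).2 ⟨huv, by simp, fun h => absurd h huv.ne'⟩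
  have hvw' := (adj_iff v w).2 ⟨hvw, fun h => absurd h huv.ne', fun h => absurd h hwu⟩
  have hwz' := (adj_iff w z).2 ⟨hwz, fun h => absurd h hwu, fun h => absurd h hzu⟩
  have hreach := huv'.reachable.trans hvw'.reachable |>.trans hwz'.reachable
  obtain ⟨huz, hz_notin, -⟩ := (adj_iff u z).1 (hbiclique u z .rfl hreach hsuz)
  exact hz_notin rfl ⟨huz, hzv⟩
end
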